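/- Let d ≥ 2. Then for every N ≥ 1 one has 0 < ε_N < 1, and lim_{N→∞} ε_N = 0. -/

import Mathlib

/-!
Write `α = d - 2`, `β = N mod 2`, `n = ⌊N/2⌋`, `P = P_{n+1}^{(α,β)}`, `w = (1-x)^α (1+x)^β` and
`W = (1-x) (1+x) w`. The classical formulas `P' = (n+α+β+2)/2 · P_n^{(α+1,β+1)}` and
`(W P_n^{(α+1,β+1)})' = -2(n+1) w P` give the Sturm–Liouville equation `(W P')' = -λ w P` with
`λ = (n+1)(n+α+β+2)`. If `P`, which is positive at `1`, had no zero in `(t, 1)`, it would be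
positive there; but for `φ = (x - t)²` the function `W P' φ - W P φ'` vanishes at `t` and at `1`
and has derivative `-w P (λ φ + (β - α - (α+β+2)x) φ' + (1 - x²) φ'')`, so by Rolle's theorem this
comparison expression cannot be positive on all of `(t, 1)`.
It is positive for `t = -α/(α+2)` as soon as `n ≥ 1`, which yields `ε_N < 1` (for `N = 1`, `P` is
linear), and for `t = 1 - 4(α+2)²/n` once `n ≥ 4(α+2)²`, which yields `ε_N = O(1/N)`. Finally
`ε_N > 0` because the zero set of `P` is closed and lies to the left of `1`.
-/

open Matrix MeasureTheory
open scoped Kronecker BigOperators ENNReal ComplexOrder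

noncomputable section

namespace SepPaper

/-- The rank-one operator `|ψ⟩⟨ψ|`. -/
def proj {n : Type*} (ψ : n → ℂ) : Matrix n n ℂ := Matrix.vecMulVec ψ (star ψ)

/-- `Λ` is a separable operator on `ℂ^{dA} ⊗ ℂ^{d}`: a finite conical combination of
pure product operators `|ψ⟩⟨ψ| ⊗ |φ⟩⟨φ|`. -/
def IsSeparable (dA d : ℕ) (Λ : Matrix (Fin dA × Fin d) (Fin dA × Fin d) ℂ) : Prop :=
  ∃ (k : ℕ) (c : Fin k → ℝ) (ψ : Fin k → (Fin dA → ℂ)) (φ : Fin k → (Fin d → ℂ)),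
    (∀ i, 0 ≤ c i) ∧
    Λ = ∑ i, (c i : ℂ) • (proj (ψ i) ⊗ₖ proj (φ i))

/-- Partial trace over the `B` system. -/
def trB {dA d : ℕ} (M : Matrix (Fin dA × Fin d) (Fin dA × Fin d) ℂ) :
    Matrix (Fin dA) (Fin dA) ℂ :=
  fun a a' => ∑ b : Fin d, M (a, b) (a', b)

/-- Index type of `ℋ_A ⊗ ℋ_B ⊗ ℋ_B^{⊗(N-1)} = ℋ_A ⊗ ℋ_B^{⊗N}` (for `N ≥ 1`). -/
abbrev ExtIdx (dA d N : ℕ) := Fin dA × Fin d × (Fin (N - 1) → Fin d)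

/-- The orthogonal projector onto the symmetric subspace of `(ℂ^d)^{⊗N}`,
realized as the average of all permutation operators. -/
def symProj (d N : ℕ) : Matrix (Fin N → Fin d) (Fin N → Fin d) ℂ :=
  (N.factorial : ℂ)⁻¹ •
    ∑ π : Equiv.Perm (Fin N), Matrix.of (fun f g => if (fun i => g (π i)) = f then (1 : ℂ) else 0)

/-- Identification of `ℂ^d ⊗ (ℂ^d)^{⊗(N-1)}` with `(ℂ^d)^{⊗((N-1)+1)}`. -/
def bEquiv (d N : ℕ) : (Fin d × (Fin (N - 1) → Fin d)) ≃ (Fin (N - 1 + 1) → Fin d) :=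
  Fin.consEquiv (fun _ => Fin d)

/-- The symmetric projector on the `N = (N-1)+1` copies of `ℂ^d`,
viewed on the index type `Fin d × (Fin (N-1) → Fin d)`. -/
def symProjB (d N : ℕ) : Matrix (Fin d × (Fin (N - 1) → Fin d)) (Fin d × (Fin (N - 1) → Fin d)) ℂ :=
  Matrix.reindex (bEquiv d N).symm (bEquiv d N).symm (symProj d (N - 1 + 1))

/-- Partial trace over the last `N-1` copies of `ℋ_B`. -/
def ptraceExt {dA d N : ℕ} (M : Matrix (ExtIdx dA d N) (ExtIdx dA d N) ℂ) :
    Matrix (Fin dA × Fin d) (Fin dA × Fin d) ℂ :=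
  fun p q => ∑ g : Fin (N - 1) → Fin d, M (p.1, p.2, g) (q.1, q.2, g)

/-- Membership in `𝒮^N`: existence of a positive semidefinite Bose-symmetric
`N`-extension. -/
def MemSN (dA d N : ℕ) (Λ : Matrix (Fin dA × Fin d) (Fin dA × Fin d) ℂ) : Prop :=
  ∃ Λext : Matrix (ExtIdx dA d N) (ExtIdx dA d N) ℂ,
    Λext.PosSemidef ∧ ptraceExt Λext = Λ ∧
    Λext * ((1 : Matrix (Fin dA) (Fin dA) ℂ) ⊗ₖ symProjB d N) = Λext

/-- Partial transpose of an operator on `ℋ_A ⊗ ℋ_B^{⊗N}` w.r.t. the bipartition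
`(A and the first ⌈N/2⌉ copies of B) | (the last ⌊N/2⌋ copies of B)`.
Copy `0` of `B` is the explicit factor and the extra copy `i : Fin (N-1)` is copy
`i+1`; copy `j` is transposed iff `⌈N/2⌉ = (N+1)/2 ≤ j`. -/
def pt {dA d N : ℕ} (M : Matrix (ExtIdx dA d N) (ExtIdx dA d N) ℂ) :
    Matrix (ExtIdx dA d N) (ExtIdx dA d N) ℂ :=
  fun p q =>
    M (p.1, p.2.1, fun i => if (N + 1) / 2 ≤ (i : ℕ) + 1 then q.2.2 i else p.2.2 i)
      (q.1, q.2.1, fun i => if (N + 1) / 2 ≤ (i : ℕ) + 1 then p.2.2 i else q.2.2 i)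

/-- Membership in `𝒮_p^N`: existence of a positive semidefinite Bose-symmetric
`N`-extension which is moreover PPT w.r.t. the bipartition
`A B^{⌈N/2⌉} | B^{⌊N/2⌋}`. -/
def MemSNp (dA d N : ℕ) (Λ : Matrix (Fin dA × Fin d) (Fin dA × Fin d) ℂ) : Prop :=
  ∃ Λext : Matrix (ExtIdx dA d N) (ExtIdx dA d N) ℂ,
    Λext.PosSemidef ∧ ptraceExt Λext = Λ ∧
    Λext * ((1 : Matrix (Fin dA) (Fin dA) ℂ) ⊗ₖ symProjB d N) = Λext ∧
    (pt Λext).PosSemidef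

/-- Membership in `𝒮̃^N = {(N/(N+d)) σ + (1/(N+d)) σ_A ⊗ 𝕀_B : σ ∈ 𝒮^N}`. -/
def MemStildeN (dA d N : ℕ) (Λ : Matrix (Fin dA × Fin d) (Fin dA × Fin d) ℂ) : Prop :=
  ∃ σ, MemSN dA d N σ ∧
    Λ = ((N : ℂ) / ((N : ℂ) + d)) • σ +
        (1 / ((N : ℂ) + d)) • (trB σ ⊗ₖ (1 : Matrix (Fin d) (Fin d) ℂ))

/-- The Jacobi polynomial `P_n^{(α,β)}` (for natural parameters `α, β`). -/
def jacobiP (n α β : ℕ) (x : ℝ) : ℝ :=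
  ∑ s ∈ Finset.range (n + 1),
    (Nat.choose (n + α) (n - s) : ℝ) * (Nat.choose (n + β) s : ℝ) *
      ((x - 1) / 2) ^ s * ((x + 1) / 2) ^ (n - s)

/-- `ε_N = (d/(2(d-1))) · min {1 - x : P_{⌊N/2⌋+1}^{(d-2, N mod 2)}(x) = 0}`. -/
def epsN (d N : ℕ) : ℝ :=
  ((d : ℝ) / (2 * ((d : ℝ) - 1))) *
    sInf {y : ℝ | ∃ x : ℝ, y = 1 - x ∧ jacobiP (N / 2 + 1) (d - 2) (N % 2) x = 0}

/-- Membership in `𝒮̃_p^N = {(1-ε_N) σ + ε_N σ_A ⊗ 𝕀_B/d : σ ∈ 𝒮_p^N}`. -/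
def MemStildeNp (dA d N : ℕ) (Λ : Matrix (Fin dA × Fin d) (Fin dA × Fin d) ℂ) : Prop :=
  ∃ σ, MemSNp dA d N σ ∧
    Λ = ((1 : ℂ) - (epsN d N : ℂ)) • σ +
        ((epsN d N : ℂ) / d) • (trB σ ⊗ₖ (1 : Matrix (Fin d) (Fin d) ℂ))

/-- The square root of a positive semidefinite matrix, as `Matrix.PosSemidef.sqrt` was
defined in the older Mathlib (removed since). -/
def _root_.Matrix.PosSemidef.sqrt {n : Type*} [Fintype n] [DecidableEq n] {A : Matrix n n ℂ}
    (hA : A.PosSemidef) : Matrix n n ℂ :=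
  hA.1.eigenvectorUnitary.1 * diagonal ((↑) ∘ (√·) ∘ hA.1.eigenvalues) *
    (star hA.1.eigenvectorUnitary : Matrix n n ℂ)

/-- The trace norm `‖Z‖₁ = tr √(Z Zᴴ)`. -/
def traceNorm {n : Type*} [Fintype n] [DecidableEq n] (Z : Matrix n n ℂ) : ℝ :=
  ((Matrix.posSemidef_self_mul_conjTranspose Z).sqrt.trace).re

/-- The operator norm `‖Z‖_∞` (largest singular value), as the norm of the induced
operator on Euclidean space. -/
def opNorm {n : Type*} [Fintype n] [DecidableEq n] (Z : Matrix n n ℂ) : ℝ :=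
  ‖LinearMap.toContinuousLinearMap (Matrix.toEuclideanLin Z)‖

/-- `(|φ⟩⟨φ|)^{⊗N}` on `ℋ_B^{⊗N} = ℋ_B ⊗ ℋ_B^{⊗(N-1)}`. -/
def projPowExt {d : ℕ} (N : ℕ) (φ : Fin d → ℂ) :
    Matrix (Fin d × (Fin (N - 1) → Fin d)) (Fin d × (Fin (N - 1) → Fin d)) ℂ :=
  fun p q => proj φ p.1 q.1 * ∏ i, proj φ (p.2 i) (q.2 i)

/-- The optimal fidelity `F = sup {tr(ρ Λ) : Λ ∈ 𝒮, tr_B Λ = 𝕀_A}`. -/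
def fid (dA d : ℕ) (ρ : Matrix (Fin dA × Fin d) (Fin dA × Fin d) ℂ) : ℝ :=
  sSup {r : ℝ | ∃ Λ, IsSeparable dA d Λ ∧ trB Λ = 1 ∧ r = ((ρ * Λ).trace).re}

/-- `F̃^N = sup {tr(ρ Λ) : Λ ∈ 𝒮̃^N, tr_B Λ = 𝕀_A}`. -/
def fidTildeN (dA d N : ℕ) (ρ : Matrix (Fin dA × Fin d) (Fin dA × Fin d) ℂ) : ℝ :=
  sSup {r : ℝ | ∃ Λ, MemStildeN dA d N Λ ∧ trB Λ = 1 ∧ r = ((ρ * Λ).trace).re}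

/-- `F̃_p^N = sup {tr(ρ Λ) : Λ ∈ 𝒮̃_p^N, tr_B Λ = 𝕀_A}`. -/
def fidTildeNp (dA d N : ℕ) (ρ : Matrix (Fin dA × Fin d) (Fin dA × Fin d) ℂ) : ℝ :=
  sSup {r : ℝ | ∃ Λ, MemStildeNp dA d N Λ ∧ trB Λ = 1 ∧ r = ((ρ * Λ).trace).re}

/-- Robustness relative to a set `T` of operators:
`R_T(ρ) = inf {tr σ : σ ∈ T, ρ + σ ∈ T}` (with `inf ∅ = +∞`). -/
def rob {dA d : ℕ} (T : Set (Matrix (Fin dA × Fin d) (Fin dA × Fin d) ℂ))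
    (ρ : Matrix (Fin dA × Fin d) (Fin dA × Fin d) ℂ) : ℝ≥0∞ :=
  sInf {t : ℝ≥0∞ | ∃ σ ∈ T, ρ + σ ∈ T ∧ t = ENNReal.ofReal ((σ.trace).re)}

section Jacobi

open Finset

def jacobiCoeff (n α β s : ℕ) : ℕ := (n + α).choose (n - s) * (n + β).choose s

theorem jacobiP_eq_sum (n α β : ℕ) (x : ℝ) :
    jacobiP n α β x = ∑ s ∈ range (n + 1),
      (jacobiCoeff n α β s : ℝ) * (((x - 1) / 2) ^ s * ((x + 1) / 2) ^ (n - s)) := by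
  simp only [jacobiP, jacobiCoeff, Nat.cast_mul, mul_assoc]

theorem jacobiCoeff_raising (n α β j : ℕ) (hj : j ≤ n) :
    jacobiCoeff (n + 1) α β (j + 1) * (j + 1) + jacobiCoeff (n + 1) α β j * (n + 1 - j) =
      (n + α + β + 2) * jacobiCoeff n (α + 1) (β + 1) j := by
  obtain ⟨k, rfl⟩ := Nat.exists_eq_add_of_le hj
  have hβ := Nat.choose_succ_right_eq (j + k + 1 + β) j
  have hα := Nat.choose_succ_right_eq (j + k + 1 + α) k
  simp only [jacobiCoeff, show j + k + 1 - (j + 1) = k by omega,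
    show j + k + 1 - j = k + 1 by omega, show j + k - j = k by omega,
    show j + k + (α + 1) = j + k + 1 + α by omega, show j + k + (β + 1) = j + k + 1 + β by omega,
    show j + k + 1 + β - j = k + 1 + β by omega, show j + k + 1 + α - k = j + 1 + α by omega] at *
  calc _ = (j + k + 1 + α).choose k * ((j + k + 1 + β).choose (j + 1) * (j + 1))
        + ((j + k + 1 + α).choose (k + 1) * (k + 1)) * (j + k + 1 + β).choose j := by ring
    _ = _ := by rw [hβ, hα]; ring

theorem jacobiCoeff_lowering_zero (n α β : ℕ) :
    jacobiCoeff n (α + 1) (β + 1) 0 * (α + 1) = (n + 1) * jacobiCoeff (n + 1) α β 0 := by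
  have h := Nat.choose_succ_right_eq (n + α + 1) n
  simp only [jacobiCoeff, Nat.choose_zero_right, Nat.sub_zero, mul_one, ← add_assoc,
    show n + 1 + α = n + α + 1 by omega, show n + α + 1 - n = α + 1 by omega] at *
  rw [mul_comm (n + 1), h]

theorem jacobiCoeff_lowering_last (n α β : ℕ) :
    jacobiCoeff n (α + 1) (β + 1) n * (β + 1) = (n + 1) * jacobiCoeff (n + 1) α β (n + 1) := by
  have h := Nat.choose_succ_right_eq (n + β + 1) n
  simp only [jacobiCoeff, Nat.choose_zero_right, Nat.sub_self, one_mul, ← add_assoc,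
    show n + 1 + β = n + β + 1 by omega, show n + β + 1 - n = β + 1 by omega] at *
  rw [mul_comm (n + 1), h]

theorem jacobiCoeff_lowering (n α β j : ℕ) (hj : j < n) :
    jacobiCoeff n (α + 1) (β + 1) (j + 1) * (j + α + 2) +
      jacobiCoeff n (α + 1) (β + 1) j * (n - j + β + 1) =
      (n + 1) * jacobiCoeff (n + 1) α β (j + 1) := by
  obtain ⟨k, rfl⟩ : ∃ k, n = j + k + 1 := ⟨n - j - 1, by omega⟩
  have hα := Nat.choose_succ_right_eq (j + k + α + 2) k
  have hβ := Nat.choose_succ_right_eq (j + k + β + 2) j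
  simp only [jacobiCoeff, show j + k + 1 - (j + 1) = k by omega,
    show j + k + 1 - j = k + 1 by omega, show j + k + 1 + 1 - (j + 1) = k + 1 by omega,
    show j + k + 1 + (α + 1) = j + k + α + 2 by omega,
    show j + k + 1 + (β + 1) = j + k + β + 2 by omega,
    show j + k + 1 + 1 + α = j + k + α + 2 by omega,
    show j + k + 1 + 1 + β = j + k + β + 2 by omega,
    show j + k + α + 2 - k = j + α + 2 by omega,
    show j + k + β + 2 - j = k + 1 + β + 1 by omega] at *
  calc _ = (j + k + β + 2).choose (j + 1) * ((j + k + α + 2).choose k * (j + α + 2))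
        + (j + k + α + 2).choose (k + 1) * ((j + k + β + 2).choose j * (k + 1 + β + 1)) := by
          ring
    _ = _ := by rw [← hα, ← hβ]; ring

theorem sum_jacobiCoeff_raising (n α β : ℕ) (u v : ℝ) :
    ∑ s ∈ range (n + 2), (jacobiCoeff (n + 1) α β s : ℝ) *
      (s * u ^ (s - 1) * v ^ (n + 1 - s) + (n + 1 - s : ℕ) * u ^ s * v ^ (n + 1 - s - 1)) =
      (n + α + β + 2) * ∑ j ∈ range (n + 1),
        (jacobiCoeff n (α + 1) (β + 1) j : ℝ) * (u ^ j * v ^ (n - j)) := by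
  let c s := (jacobiCoeff (n + 1) α β s : ℝ)
  have hX : ∑ s ∈ range (n + 2), c s * (s * u ^ (s - 1) * v ^ (n + 1 - s)) =
      ∑ j ∈ range (n + 1), c (j + 1) * (j + 1) * u ^ j * v ^ (n - j) := by
    rw [sum_range_succ']
    simp only [Nat.cast_zero, zero_mul, mul_zero, add_zero]
    refine sum_congr rfl fun j _ => ?_
    rw [show n + 1 - (j + 1) = n - j by omega]
    push_cast
    ring
  have hY : ∑ s ∈ range (n + 2), c s * ((n + 1 - s : ℕ) * u ^ s * v ^ (n + 1 - s - 1)) =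
      ∑ j ∈ range (n + 1), c j * (n + 1 - j : ℕ) * u ^ j * v ^ (n - j) := by
    rw [sum_range_succ]
    simp only [Nat.sub_self, Nat.cast_zero, zero_mul, mul_zero, add_zero]
    refine sum_congr rfl fun j _ => ?_
    rw [show n + 1 - j - 1 = n - j by omega, mul_assoc, mul_assoc, mul_assoc]
  rw [show ∑ s ∈ range (n + 2), _ = _ from sum_congr rfl fun s _ => mul_add _ _ _,
    sum_add_distrib, hX, hY, ← sum_add_distrib, mul_sum]
  refine sum_congr rfl fun j hj => ?_
  have hc : c (j + 1) * (j + 1) + c j * (n + 1 - j : ℕ) =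
      (n + α + β + 2) * jacobiCoeff n (α + 1) (β + 1) j := by
    simp only [c]
    exact_mod_cast jacobiCoeff_raising n α β j (Nat.lt_succ_iff.mp (mem_range.mp hj))
  linear_combination u ^ j * v ^ (n - j) * hc

theorem sum_jacobiCoeff_lowering (n α β : ℕ) (u v : ℝ) :
    ∑ s ∈ range (n + 1), (jacobiCoeff n (α + 1) (β + 1) s : ℝ) *
      ((s + α + 1 : ℕ) * u ^ s * v ^ (n + 1 - s) +
        (n - s + β + 1 : ℕ) * u ^ (s + 1) * v ^ (n - s)) =
      (n + 1) * ∑ j ∈ range (n + 2),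
        (jacobiCoeff (n + 1) α β j : ℝ) * (u ^ j * v ^ (n + 1 - j)) := by
  let e s := (jacobiCoeff n (α + 1) (β + 1) s : ℝ)
  let c s := (jacobiCoeff (n + 1) α β s : ℝ)
  have hA : ∑ s ∈ range (n + 1), e s * ((s + α + 1 : ℕ) * u ^ s * v ^ (n + 1 - s)) =
      e 0 * (α + 1 : ℕ) * v ^ (n + 1) +
        ∑ s ∈ range n, e (s + 1) * (s + α + 2 : ℕ) * u ^ (s + 1) * v ^ (n - s) := by
    rw [sum_range_succ', add_comm]
    simp only [pow_zero, one_mul, zero_add, Nat.sub_zero, Nat.add_sub_add_right,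
      show ∀ s, s + 1 + α + 1 = s + α + 2 from fun s => by omega, mul_assoc]
  have hB : ∑ s ∈ range (n + 1), e s * ((n - s + β + 1 : ℕ) * u ^ (s + 1) * v ^ (n - s)) =
      ∑ s ∈ range n, e s * (n - s + β + 1 : ℕ) * u ^ (s + 1) * v ^ (n - s) +
        e n * (β + 1 : ℕ) * u ^ (n + 1) := by
    rw [sum_range_succ]
    simp only [Nat.sub_self, zero_add, pow_zero, mul_one, mul_assoc]
  have hC : ∑ j ∈ range (n + 2), c j * (u ^ j * v ^ (n + 1 - j)) =
      c 0 * v ^ (n + 1) + ∑ s ∈ range n, c (s + 1) * (u ^ (s + 1) * v ^ (n - s)) +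
        c (n + 1) * u ^ (n + 1) := by
    rw [sum_range_succ, sum_range_succ']
    simp only [pow_zero, one_mul, Nat.sub_zero, Nat.sub_self, mul_one, Nat.add_sub_add_right]
    ring
  have h0 : e 0 * (α + 1 : ℕ) = (n + 1) * c 0 := by
    simp only [e, c]; exact_mod_cast jacobiCoeff_lowering_zero n α β
  have hlast : e n * (β + 1 : ℕ) = (n + 1) * c (n + 1) := by
    simp only [e, c]; exact_mod_cast jacobiCoeff_lowering_last n α β
  have hmid : ∀ s ∈ range n, e (s + 1) * (s + α + 2 : ℕ) * u ^ (s + 1) * v ^ (n - s) +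
      e s * (n - s + β + 1 : ℕ) * u ^ (s + 1) * v ^ (n - s) =
      (n + 1) * (c (s + 1) * (u ^ (s + 1) * v ^ (n - s))) := fun s hs => by
    have h : e (s + 1) * (s + α + 2 : ℕ) + e s * (n - s + β + 1 : ℕ) = (n + 1) * c (s + 1) := by
      simp only [e, c]; exact_mod_cast jacobiCoeff_lowering n α β s (mem_range.mp hs)
    linear_combination u ^ (s + 1) * v ^ (n - s) * h
  rw [show ∑ s ∈ range (n + 1), _ = _ from sum_congr rfl fun s _ => mul_add _ _ _]
  rw [sum_add_distrib, hA, hB, hC, mul_add, mul_add, mul_sum, ← sum_congr rfl hmid,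
    sum_add_distrib]
  linear_combination v ^ (n + 1) * h0 + u ^ (n + 1) * hlast

theorem natCast_mul_pow_pred_mul {R : Type*} [CommSemiring R] (k : ℕ) (y : R) :
    (k : R) * (y ^ (k - 1) * y) = k * y ^ k := by
  rcases Nat.eq_zero_or_pos k with rfl | hk
  · simp
  · rw [pow_sub_one_mul hk.ne']

theorem hasDerivAt_jacobiP (n α β : ℕ) (x : ℝ) :
    HasDerivAt (jacobiP n α β) (∑ s ∈ range (n + 1), (jacobiCoeff n α β s : ℝ) *
      ((s * ((x - 1) / 2) ^ (s - 1) * ((x + 1) / 2) ^ (n - s)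
        + (n - s : ℕ) * ((x - 1) / 2) ^ s * ((x + 1) / 2) ^ (n - s - 1)) / 2)) x := by
  have hu : HasDerivAt (fun y : ℝ => (y - 1) / 2) (1 / 2) x :=
    ((hasDerivAt_id x).sub_const 1).div_const 2
  have hv : HasDerivAt (fun y : ℝ => (y + 1) / 2) (1 / 2) x :=
    ((hasDerivAt_id x).add_const 1).div_const 2
  rw [show jacobiP n α β = _ from funext (jacobiP_eq_sum n α β)]
  refine HasDerivAt.fun_sum fun s _ => ?_
  exact (((hu.fun_pow s).fun_mul (hv.fun_pow (n - s))).const_mul _).congr_deriv (by ring)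

theorem hasDerivAt_jacobiP_succ (n α β : ℕ) (x : ℝ) :
    HasDerivAt (jacobiP (n + 1) α β)
      ((n + α + β + 2) / 2 * jacobiP n (α + 1) (β + 1) x) x := by
  convert hasDerivAt_jacobiP (n + 1) α β x using 1
  simp only [mul_div_assoc']
  rw [← sum_div, sum_jacobiCoeff_raising, jacobiP_eq_sum]
  ring

theorem hasDerivAt_jacobiWeight (α β : ℕ) (x : ℝ) :
    HasDerivAt (fun y : ℝ => (1 - y) ^ (α + 1) * (1 + y) ^ (β + 1))
      ((1 - x) ^ α * (1 + x) ^ β * ((β + 1) * (1 - x) - (α + 1) * (1 + x))) x := by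
  have h1 := ((hasDerivAt_id x).const_sub 1).fun_pow (α + 1)
  have h2 := ((hasDerivAt_id x).const_add 1).fun_pow (β + 1)
  refine (h1.fun_mul h2).congr_deriv ?_
  simp only [id, Nat.add_sub_cancel, Nat.cast_add, Nat.cast_one]
  ring

theorem hasDerivAt_weight_mul_jacobiP (n α β : ℕ) (x : ℝ) :
    HasDerivAt (fun y => (1 - y) ^ (α + 1) * (1 + y) ^ (β + 1) * jacobiP n (α + 1) (β + 1) y)
      (-(2 * (n + 1)) * ((1 - x) ^ α * (1 + x) ^ β * jacobiP (n + 1) α β x)) x := by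
  refine ((hasDerivAt_jacobiWeight α β x).fun_mul
    (hasDerivAt_jacobiP n (α + 1) (β + 1) x)).congr_deriv ?_
  set u := (x - 1) / 2
  set v := (x + 1) / 2
  -- in these variables `1 - x = -2u`, `1 + x = 2v`, and the claim becomes a reindexing identity
  have key : ((β + 1) * u + (α + 1) * v) * jacobiP n (α + 1) (β + 1) x + 2 * u * v *
      ∑ s ∈ range (n + 1), (jacobiCoeff n (α + 1) (β + 1) s : ℝ) *
        ((s * u ^ (s - 1) * v ^ (n - s) + (n - s : ℕ) * u ^ s * v ^ (n - s - 1)) / 2) =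
      (n + 1) * jacobiP (n + 1) α β x := by
    rw [jacobiP_eq_sum, jacobiP_eq_sum, ← sum_jacobiCoeff_lowering, mul_sum, mul_sum,
      ← sum_add_distrib]
    refine sum_congr rfl fun s hs => ?_
    have hs : s ≤ n := Nat.lt_succ_iff.mp (mem_range.mp hs)
    have hu := natCast_mul_pow_pred_mul s u
    have hv := natCast_mul_pow_pred_mul (n - s) v
    rw [show n + 1 - s = n - s + 1 by omega]
    simp only [Nat.cast_add, Nat.cast_one]
    linear_combination
      (jacobiCoeff n (α + 1) (β + 1) s : ℝ) * (v ^ (n - s) * v * hu + u ^ s * u * hv)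
  linear_combination (1 - x) ^ α * (1 + x) ^ β * (-2) * key

theorem jacobiP_pos {n α β : ℕ} {x : ℝ} (hx : 1 ≤ x) : 0 < jacobiP n α β x := by
  rw [jacobiP_eq_sum]
  have hu : 0 ≤ (x - 1) / 2 := by linarith
  have hv : 0 < (x + 1) / 2 := by linarith
  refine sum_pos' (fun s _ => by positivity) ⟨0, by simp, ?_⟩
  have : 0 < jacobiCoeff n α β 0 :=
    Nat.mul_pos (Nat.choose_pos (by omega)) (Nat.choose_pos (by omega))
  positivity

theorem continuous_jacobiP (n α β : ℕ) : Continuous (jacobiP n α β) :=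
  continuous_iff_continuousAt.2 fun x => (hasDerivAt_jacobiP n α β x).continuousAt

theorem jacobiP_pos_of_forall_ne_zero {n α β : ℕ} {t : ℝ}
    (h : ∀ x ∈ Set.Ioo t 1, jacobiP n α β x ≠ 0) : ∀ x ∈ Set.Ioo t 1, 0 < jacobiP n α β x := by
  intro x hx
  by_contra! hneg
  obtain ⟨c, hc, hc0⟩ := intermediate_value_Ico hx.2.le (continuous_jacobiP n α β).continuousOn
    ⟨hneg, jacobiP_pos le_rfl⟩
  exact h c ⟨hx.1.trans_le hc.1, hc.2⟩ hc0

theorem exists_jacobiP_root_of_comparison (n α β : ℕ) {t : ℝ} (ht : -1 ≤ t) (ht1 : t < 1)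
    {φ φ' φ'' : ℝ → ℝ} (hφ : ∀ x, HasDerivAt φ (φ' x) x) (hφ' : ∀ x, HasDerivAt φ' (φ'' x) x)
    (hφt : φ t = 0) (hφ't : φ' t = 0)
    (hG : ∀ x ∈ Set.Ioo t 1, 0 < (n + 1) * (n + α + β + 2) * φ x +
      ((β - α) - (α + β + 2) * x) * φ' x + (1 - x ^ 2) * φ'' x) :
    ∃ x ∈ Set.Ioo t 1, jacobiP (n + 1) α β x = 0 := by
  by_contra! hne
  have hpos := jacobiP_pos_of_forall_ne_zero hne
  set P := jacobiP (n + 1) α β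
  set Q := jacobiP n (α + 1) (β + 1)
  let W : ℝ → ℝ := fun y => (1 - y) ^ (α + 1) * (1 + y) ^ (β + 1)
  -- `P' = (n + α + β + 2) / 2 * Q`, so `H = W P' φ - W P φ'`
  let H : ℝ → ℝ := fun y => (n + α + β + 2) / 2 * (W y * Q y) * φ y - W y * P y * φ' y
  have hH : ∀ x, HasDerivAt H (-((1 - x) ^ α * (1 + x) ^ β * P x *
      ((n + 1) * (n + α + β + 2) * φ x + ((β - α) - (α + β + 2) * x) * φ' x +
        (1 - x ^ 2) * φ'' x))) x := fun x => by
    have := (((hasDerivAt_weight_mul_jacobiP n α β x).const_mul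
      ((n + α + β + 2) / 2 : ℝ)).fun_mul (hφ x)).fun_sub
        (((hasDerivAt_jacobiWeight α β x).fun_mul (hasDerivAt_jacobiP_succ n α β x)).fun_mul
          (hφ' x))
    refine this.congr_deriv ?_
    ring
  obtain ⟨c, hc, hc0⟩ := exists_hasDerivAt_eq_zero ht1
    (fun x _ => (hH x).continuousAt.continuousWithinAt) (by simp [H, W, hφt, hφ't])
    fun x _ => hH x
  have hw : 0 < (1 - c) ^ α * (1 + c) ^ β :=
    mul_pos (pow_pos (by linarith [hc.2]) _) (pow_pos (by linarith [hc.1]) _)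
  linarith [mul_pos (mul_pos hw (hpos c hc)) (hG c hc)]

theorem exists_jacobiP_root_of_quadratic_comparison (n α β : ℕ) {t : ℝ} (ht : -1 ≤ t)
    (ht1 : t < 1)
    (hG : ∀ x ∈ Set.Ioo t 1, 0 < (n + 1) * (n + α + β + 2) * (x - t) ^ 2 +
      2 * ((β - α) - (α + β + 2) * x) * (x - t) + 2 * (1 - x ^ 2)) :
    ∃ x ∈ Set.Ioo t 1, jacobiP (n + 1) α β x = 0 := by
  refine exists_jacobiP_root_of_comparison n α β ht ht1 (φ := fun x => (x - t) ^ 2)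
    (φ' := fun x => 2 * (x - t)) (φ'' := fun _ => 2) (fun x => ?_) (fun x => ?_) (by simp)
    (by simp) fun x hx => by linarith [hG x hx]
  · simpa using ((hasDerivAt_id x).sub_const t).fun_pow 2
  · simpa using ((hasDerivAt_id x).sub_const t).const_mul 2

theorem exists_jacobiP_root_gt (n α β : ℕ) (hn : 1 ≤ n) :
    ∃ x ∈ Set.Ioo (-α / (α + 2) : ℝ) 1, jacobiP (n + 1) α β x = 0 := by
  have ha : (0 : ℝ) < α + 2 := by positivity
  have ht : -1 ≤ (-α / (α + 2) : ℝ) := by rw [le_div_iff₀ ha]; linarith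
  have ht1 : (-α / (α + 2) : ℝ) < 1 := by rw [div_lt_iff₀ ha]; linarith
  refine exists_jacobiP_root_of_quadratic_comparison n α β ht ht1 fun x hx => ?_
  have hL : (2 * (α + 2) : ℝ) < (n + 1) * (n + α + β + 2) := by
    have : (1 : ℝ) ≤ n := by exact_mod_cast hn
    nlinarith
  -- uses `(α + 2) t = -α`
  have hdrift : (β - α) - (α + β + 2) * x = β * (1 - x) - (α + 2) * (x - -α / (α + 2)) := by
    field_simp
    ring
  have hp : 0 < x - -α / (α + 2) := sub_pos.2 hx.1
  have hq : 0 < 1 - x := sub_pos.2 hx.2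
  have hq' : 0 < 1 + x := by linarith [hx.1]
  rw [hdrift]
  nlinarith [mul_pos (sub_pos.2 hL) (mul_pos hp hp),
    mul_nonneg (Nat.cast_nonneg β) (mul_pos hp hq).le, mul_pos hq hq']

theorem exists_jacobiP_root_near_one (n α β : ℕ) (hn : 4 * ((α : ℝ) + 2) ^ 2 ≤ n) :
    ∃ x ∈ Set.Ioo (1 - 4 * ((α : ℝ) + 2) ^ 2 / n) 1, jacobiP (n + 1) α β x = 0 := by
  set h := 4 * ((α : ℝ) + 2) ^ 2 / n
  have hK : 0 < 4 * ((α : ℝ) + 2) ^ 2 := by positivity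
  have hn0 : (0 : ℝ) < n := hK.trans_le hn
  have hh0 : 0 < h := div_pos hK hn0
  have hh1 : h ≤ 1 := (div_le_one hn0).2 hn
  set L : ℝ := (n + 1) * (n + α + β + 2)
  have hLh : 4 * ((α : ℝ) + 2) ^ 2 ≤ L * h := by
    have hnL : (n : ℝ) ≤ L :=
      calc (n : ℝ) ≤ n + 1 := by linarith
        _ ≤ L := le_mul_of_one_le_right (by positivity)
          (by linarith [Nat.cast_nonneg (α := ℝ) n])
    rw [mul_div_assoc', le_div_iff₀ hn0, mul_comm L]
    exact mul_le_mul_of_nonneg_left hnL hK.le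
  refine exists_jacobiP_root_of_quadratic_comparison n α β (by linarith) (by linarith)
    fun x hx => ?_
  set p := x - (1 - h)
  set q := 1 - x
  have hp : 0 < p := sub_pos.2 hx.1
  have hq : 0 < q := sub_pos.2 hx.2
  have hLpq : L * p + L * q = L * h := by ring
  -- the drift coefficient equals `(α + β + 2) q - (2α + 2)`
  have hdrift : -(2 * α + 2) * p ≤ ((β - α) - (α + β + 2) * x) * p := by
    have : (0 : ℝ) ≤ (α + β + 2) * q := by positivity
    nlinarith
  have hL : 0 < L := by positivity
  have hq1 : q < 1 := by linarith
  -- for `p ≥ q` the term `L p²` beats `2 (2α + 2) p`; otherwise `2 q (2 - q) > h`, and `L h`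
  -- beats the minimum `-(2α + 2)² / L` of `L p² - 2 (2α + 2) p`
  have hG : 0 < L * p ^ 2 - 2 * (2 * α + 2) * p + 2 * q * (2 - q) := by
    rcases le_or_gt q p with hqp | hpq'
    · have hLp : 2 * (2 * α + 2) ≤ L * p := by
        linarith [mul_le_mul_of_nonneg_left hqp hL.le, sq_nonneg (α : ℝ)]
      linarith [mul_nonneg hp.le (sub_nonneg.2 hLp), mul_pos hq (by linarith : (0 : ℝ) < 2 - q)]
    · have h2q : h < 2 * q * (2 - q) := by nlinarith
      have hLG : 0 < L * (L * p ^ 2 - 2 * (2 * α + 2) * p + 2 * q * (2 - q)) := by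
        linarith [sq_nonneg (L * p - (2 * α + 2)), mul_lt_mul_of_pos_left h2q hL]
      exact pos_of_mul_pos_right hLG hL.le
  nlinarith

theorem jacobiP_one_root (α β : ℕ) : jacobiP 1 α β ((β - α) / (α + β + 2)) = 0 := by
  have : (α + β + 2 : ℝ) ≠ 0 := by positivity
  simp only [jacobiP, sum_range_succ, sum_range_zero]
  norm_num
  field_simp
  ring

theorem exists_jacobiP_root_gt_of_one_le (N α : ℕ) (hN : 1 ≤ N) :
    ∃ x, (-α / (α + 2) : ℝ) < x ∧ jacobiP (N / 2 + 1) α (N % 2) x = 0 := by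
  rcases Nat.lt_or_ge (N / 2) 1 with h | h
  · obtain rfl : N = 1 := by omega
    refine ⟨_, ?_, jacobiP_one_root α 1⟩
    have ha : (0 : ℝ) < α + 2 := by positivity
    rw [div_lt_div_iff₀ ha (by positivity)]
    push_cast
    nlinarith
  · obtain ⟨x, hx, hroot⟩ := exists_jacobiP_root_gt (N / 2) α (N % 2) h
    exact ⟨x, hx.1, hroot⟩

end Jacobi

def oneSubJacobiRoots (n α β : ℕ) : Set ℝ := {y | ∃ x : ℝ, y = 1 - x ∧ jacobiP n α β x = 0}

theorem isClosed_oneSubJacobiRoots (n α β : ℕ) : IsClosed (oneSubJacobiRoots n α β) := by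
  have : oneSubJacobiRoots n α β = {y | jacobiP n α β (1 - y) = 0} :=
    Set.ext fun y => ⟨fun ⟨x, hy, hx⟩ => by simp [hy, hx], fun h => ⟨1 - y, by ring, h⟩⟩
  rw [this]
  exact isClosed_eq ((continuous_jacobiP n α β).comp (continuous_const.sub continuous_id))
    continuous_const

theorem pos_of_mem_oneSubJacobiRoots {n α β : ℕ} {y : ℝ} (hy : y ∈ oneSubJacobiRoots n α β) :
    0 < y := by
  obtain ⟨x, rfl, hx⟩ := hy
  by_contra! h
  exact (jacobiP_pos (by linarith)).ne' hx

theorem bddBelow_oneSubJacobiRoots (n α β : ℕ) : BddBelow (oneSubJacobiRoots n α β) :=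
  ⟨0, fun _ hy => (pos_of_mem_oneSubJacobiRoots hy).le⟩

theorem sInf_oneSubJacobiRoots_pos {n α β : ℕ} (h : (oneSubJacobiRoots n α β).Nonempty) :
    0 < sInf (oneSubJacobiRoots n α β) :=
  pos_of_mem_oneSubJacobiRoots
    ((isClosed_oneSubJacobiRoots n α β).csInf_mem h (bddBelow_oneSubJacobiRoots n α β))

theorem sInf_oneSubJacobiRoots_le {n α β : ℕ} {x : ℝ} (hx : jacobiP n α β x = 0) :
    sInf (oneSubJacobiRoots n α β) ≤ 1 - x :=
  csInf_le (bddBelow_oneSubJacobiRoots n α β) ⟨x, rfl, hx⟩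

theorem epsN_le_of_root {d N : ℕ} (hd : 2 ≤ d) {x : ℝ}
    (hx : jacobiP (N / 2 + 1) (d - 2) (N % 2) x = 0) :
    epsN d N ≤ d / (2 * (d - 1)) * (1 - x) := by
  have hd' : (2 : ℝ) ≤ d := by exact_mod_cast hd
  exact mul_le_mul_of_nonneg_left (sInf_oneSubJacobiRoots_le hx)
    (div_nonneg (by linarith) (by linarith))

theorem epsN_pos {d N : ℕ} (hd : 2 ≤ d) (hN : 1 ≤ N) : 0 < epsN d N := by
  have hd' : (2 : ℝ) ≤ d := by exact_mod_cast hd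
  obtain ⟨x, -, hx⟩ := exists_jacobiP_root_gt_of_one_le N (d - 2) hN
  exact mul_pos (div_pos (by linarith) (by linarith))
    (sInf_oneSubJacobiRoots_pos ⟨_, x, rfl, hx⟩)

theorem epsN_lt_one {d N : ℕ} (hd : 2 ≤ d) (hN : 1 ≤ N) : epsN d N < 1 := by
  have hd' : (2 : ℝ) ≤ d := by exact_mod_cast hd
  obtain ⟨x, hx, hroot⟩ := exists_jacobiP_root_gt_of_one_le N (d - 2) hN
  rw [Nat.cast_sub hd, Nat.cast_two, sub_add_cancel, neg_div] at hx
  calc epsN d N ≤ d / (2 * (d - 1)) * (1 - x) := epsN_le_of_root hd hroot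
    _ < d / (2 * (d - 1)) * (1 + (d - 2) / d) := by
      gcongr
      · exact div_pos (by linarith) (by linarith)
      · linarith
    _ = 1 := by
      have : (d : ℝ) - 1 ≠ 0 := by linarith
      field_simp
      ring

theorem epsN_le_div {d N : ℕ} (hd : 2 ≤ d) (hN : 8 * d ^ 2 ≤ N) :
    epsN d N ≤ d / (2 * (d - 1)) * (4 * d ^ 2 / (N / 2 : ℕ)) := by
  have hd' : (2 : ℝ) ≤ d := by exact_mod_cast hd
  have hα : ((d - 2 : ℕ) : ℝ) + 2 = d := by rw [Nat.cast_sub hd]; ring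
  have hn : 4 * (((d - 2 : ℕ) : ℝ) + 2) ^ 2 ≤ (N / 2 : ℕ) := by
    rw [hα]
    exact_mod_cast (Nat.le_div_iff_mul_le two_pos).2 (by linarith)
  obtain ⟨x, hx, hroot⟩ := exists_jacobiP_root_near_one (N / 2) (d - 2) (N % 2) hn
  rw [hα] at hx
  exact (epsN_le_of_root hd hroot).trans (mul_le_mul_of_nonneg_left (by linarith [hx.1])
    (div_nonneg (by linarith) (by linarith)))

/-- for `d ≥ 2`, one has `0 < ε_N < 1` for every `N ≥ 1`,
and `ε_N → 0` as `N → ∞`. -/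
theorem stmt16 (d : ℕ) (hd : 2 ≤ d) :
    (∀ N : ℕ, 1 ≤ N → 0 < epsN d N ∧ epsN d N < 1) ∧
    Filter.Tendsto (fun N : ℕ => epsN d N) Filter.atTop (nhds 0) := by
  refine ⟨fun N hN => ⟨epsN_pos hd hN, epsN_lt_one hd hN⟩,
    tendsto_of_tendsto_of_tendsto_of_le_of_le' tendsto_const_nhds
      (h := fun N : ℕ => (d : ℝ) / (2 * (d - 1)) * (4 * d ^ 2 / (N / 2 : ℕ))) ?_ ?_ ?_⟩
  · simpa using ((tendsto_const_div_atTop_nhds_zero_nat (4 * (d : ℝ) ^ 2)).comp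
      (Nat.tendsto_div_const_atTop two_ne_zero)).const_mul ((d : ℝ) / (2 * (d - 1)))
  · filter_upwards [Filter.eventually_ge_atTop 1] with N hN using (epsN_pos hd hN).le
  · filter_upwards [Filter.eventually_ge_atTop (8 * d ^ 2)] with N hN using epsN_le_div hd hN

end SepPaper
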